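/- Let A be an n×n real matrix (n ≥ 1) and m ≥ 1. For 0 ≤ i < n let α_i = max over subsets S with |S| = n − i of the tropical permanent of A|_S, set α_n = 0, and define β_i analogously for A^{⊙m} with β_n = 0. Let f_A(x) = max_{0 ≤ i ≤ n} (α_i + i·x) and f_{A^{⊙m}}(x) = max_{0 ≤ i ≤ n} (β_i + i·x). Then for every x ∈ ℝ, f_{A^{⊙m}}(m·x) ≥ m · f_A(x). -/
import Mathlib


/-- The tropical (max-plus) product of two `n × n` real matrices:
`(A ⊙ B) i j = max_k (A i k + B k j)`. -/
noncomputable def tropMul {n : ℕ} [NeZero n] (A B : Fin n → Fin n → ℝ) :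
    Fin n → Fin n → ℝ :=
  fun i j => Finset.univ.sup' Finset.univ_nonempty fun k => A i k + B k j

/-- The `m`-th tropical power `A^{⊙m}` of an `n × n` real matrix (meaningful for
`m ≥ 1`; the value at `m = 0` is a junk value). -/
noncomputable def tropPow {n : ℕ} [NeZero n] (A : Fin n → Fin n → ℝ) :
    ℕ → Fin n → Fin n → ℝ
  | 0 => fun _ _ => 0
  | 1 => A
  | m + 2 => tropMul A (tropPow A (m + 1))

/-- The tropical permanent of the principal submatrix of `M` on the index set
`S`: the maximum over permutations `σ` of `S` of `∑_{i ∈ S} M i (σ i)`. -/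
noncomputable def tropPermOn {n : ℕ} (M : Fin n → Fin n → ℝ) (S : Finset (Fin n)) : ℝ :=
  Finset.univ.sup' ⟨Equiv.refl {x // x ∈ S}, Finset.mem_univ _⟩
    fun σ : Equiv.Perm {x // x ∈ S} => ∑ i : {x // x ∈ S}, M (i : Fin n) ((σ i : Fin n))

/-- The coefficient of `x^i` in the tropical characteristic polynomial of `M`
for `i < n`: the maximum of the tropical permanents of all principal
`(n−i) × (n−i)` minors; the leading coefficient (`i = n`) is set to `0`. -/
noncomputable def tropCharCoeff {n : ℕ} (M : Fin n → Fin n → ℝ) (i : ℕ) : ℝ :=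
  if i = n then 0
  else ((Finset.univ : Finset (Fin n)).powersetCard (n - i)).sup'
    (Finset.powersetCard_nonempty.mpr (by simp))
    fun S => tropPermOn M S

/-- The tropical characteristic polynomial of `M`, as a function:
`f_M(x) = max_{0 ≤ i ≤ n} (α_i + i·x)`. -/
noncomputable def tropCharPoly {n : ℕ} (M : Fin n → Fin n → ℝ) (x : ℝ) : ℝ :=
  Finset.univ.sup' Finset.univ_nonempty
    fun i : Fin (n + 1) => tropCharCoeff M (i : ℕ) + (i : ℕ) * x


lemma tropPow_ge_sum {n : ℕ} [NeZero n] (A : Fin n → Fin n → ℝ) :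
    ∀ m, 1 ≤ m → ∀ g : ℕ → Fin n,
      ∑ k ∈ Finset.range m, A (g k) (g (k + 1)) ≤ tropPow A m (g 0) (g m)
  | 0, h, _ => by omega
  | 1, _, g => by simp [tropPow]
  | (m + 2), _, g => by
      have IH := tropPow_ge_sum A (m + 1) (by omega) (fun k => g (k + 1))
      have h1 : A (g 0) (g 1) + tropPow A (m + 1) (g 1) (g (m + 2)) ≤
          tropPow A (m + 2) (g 0) (g (m + 2)) :=
        Finset.le_sup' (fun k => A (g 0) k + tropPow A (m + 1) k (g (m + 2)))
          (Finset.mem_univ (g 1))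
      have h2 : ∑ k ∈ Finset.range (m + 2), A (g k) (g (k + 1)) =
          (∑ k ∈ Finset.range (m + 1), A (g (k + 1)) (g (k + 2))) + A (g 0) (g 1) :=
        Finset.sum_range_succ' _ _
      simp only [h2]
      linarith

lemma tropPermOn_pow_ge {n : ℕ} [NeZero n] (A : Fin n → Fin n → ℝ) (m : ℕ) (hm : 1 ≤ m)
    (S : Finset (Fin n)) (σ : Equiv.Perm {x // x ∈ S}) :
    (m : ℝ) * ∑ i : {x // x ∈ S}, A (i : Fin n) ((σ i : Fin n)) ≤
      tropPermOn (tropPow A m) S := by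
  have key : ∀ i : {x // x ∈ S},
      ∑ k ∈ Finset.range m, A (((σ ^ k) i : Fin n)) (((σ ^ (k + 1)) i : Fin n)) ≤
        tropPow A m (i : Fin n) (((σ ^ m) i : Fin n)) := by
    intro i
    have := tropPow_ge_sum A m hm (fun k => ((σ ^ k) i : Fin n))
    simpa using this
  have step1 : (m : ℝ) * ∑ i : {x // x ∈ S}, A (i : Fin n) ((σ i : Fin n)) =
      ∑ k ∈ Finset.range m, ∑ i : {x // x ∈ S},
        A (((σ ^ k) i : Fin n)) (((σ ^ (k + 1)) i : Fin n)) := by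
    have hk : ∀ k, ∑ i : {x // x ∈ S}, A (((σ ^ k) i : Fin n)) (((σ ^ (k + 1)) i : Fin n)) =
        ∑ i : {x // x ∈ S}, A (i : Fin n) ((σ i : Fin n)) := by
      intro k
      rw [← Equiv.sum_comp (σ ^ k) (fun i => A (i : Fin n) ((σ i : Fin n)))]
      refine Finset.sum_congr rfl fun i _ => ?_
      simp [pow_succ']
    rw [Finset.sum_congr rfl (fun k _ => hk k), Finset.sum_const, Finset.card_range,
      nsmul_eq_mul]
  have step2 : ∑ k ∈ Finset.range m, ∑ i : {x // x ∈ S},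
        A (((σ ^ k) i : Fin n)) (((σ ^ (k + 1)) i : Fin n)) ≤
      ∑ i : {x // x ∈ S}, tropPow A m (i : Fin n) (((σ ^ m) i : Fin n)) := by
    rw [Finset.sum_comm]
    exact Finset.sum_le_sum fun i _ => key i
  have step3 : ∑ i : {x // x ∈ S}, tropPow A m (i : Fin n) (((σ ^ m) i : Fin n)) ≤
      tropPermOn (tropPow A m) S :=
    Finset.le_sup' (fun τ : Equiv.Perm {x // x ∈ S} =>
      ∑ i : {x // x ∈ S}, tropPow A m (i : Fin n) ((τ i : Fin n))) (Finset.mem_univ (σ ^ m))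
  linarith

lemma tropCharCoeff_pow_ge {n : ℕ} [NeZero n] (A : Fin n → Fin n → ℝ) (m : ℕ) (hm : 1 ≤ m)
    (i : ℕ) (hi : i ≠ n) :
    (m : ℝ) * tropCharCoeff A i ≤ tropCharCoeff (tropPow A m) i := by
  rw [tropCharCoeff, tropCharCoeff, if_neg hi, if_neg hi]
  set hne : (Finset.univ.powersetCard (n - i) : Finset (Finset (Fin n))).Nonempty :=
    Finset.powersetCard_nonempty.mpr (by simp)
  obtain ⟨S, hS, hSeq⟩ := Finset.exists_mem_eq_sup' hne (fun S => tropPermOn A S)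
  rw [hSeq]
  obtain ⟨σ, _, hσeq⟩ := Finset.exists_mem_eq_sup'
    (⟨Equiv.refl {x // x ∈ S}, Finset.mem_univ _⟩ :
      (Finset.univ : Finset (Equiv.Perm {x // x ∈ S})).Nonempty)
    (fun σ : Equiv.Perm {x // x ∈ S} => ∑ j : {x // x ∈ S}, A (j : Fin n) ((σ j : Fin n)))
  have h1 : tropPermOn A S = ∑ j : {x // x ∈ S}, A (j : Fin n) ((σ j : Fin n)) := hσeq
  calc (m : ℝ) * tropPermOn A S ≤ tropPermOn (tropPow A m) S := by
        rw [h1]; exact tropPermOn_pow_ge A m hm S σ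
    _ ≤ _ := Finset.le_sup' (fun S => tropPermOn (tropPow A m) S) hS

/-- Functional form of Theorem 3.6: the tropical characteristic polynomial of
`A^{⊙m}` evaluated at `m·x` dominates `m` times the tropical characteristic
polynomial of `A` evaluated at `x`. -/
theorem tropCharPoly_tropPow_ge {n : ℕ} [NeZero n] (A : Fin n → Fin n → ℝ)
    (m : ℕ) (hm : 1 ≤ m) (x : ℝ) :
    tropCharPoly (tropPow A m) ((m : ℝ) * x) ≥ (m : ℝ) * tropCharPoly A x := by
  obtain ⟨i, _, hieq⟩ := Finset.exists_mem_eq_sup'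
    (Finset.univ_nonempty : (Finset.univ : Finset (Fin (n+1))).Nonempty)
    (fun i : Fin (n + 1) => tropCharCoeff A (i : ℕ) + (i : ℕ) * x)
  rw [ge_iff_le, tropCharPoly, hieq]
  have hle : (m : ℝ) * (tropCharCoeff A (i : ℕ) + (i : ℕ) * x) ≤
      tropCharCoeff (tropPow A m) (i : ℕ) + (i : ℕ) * ((m : ℝ) * x) := by
    by_cases hin : (i : ℕ) = n
    · rw [tropCharCoeff, tropCharCoeff, if_pos hin, if_pos hin]; ring_nf; linarith []
    · have := tropCharCoeff_pow_ge A m hm (i : ℕ) hin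
      nlinarith [this]
  exact le_trans hle (Finset.le_sup'
    (fun j : Fin (n + 1) => tropCharCoeff (tropPow A m) (j : ℕ) + (j : ℕ) * ((m : ℝ) * x))
    (Finset.mem_univ i))
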